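/- If f has a (k,ℓ)-debate, then f has a (k',ℓ)-debate with k' ≤ 2^ℓ. -/

import Mathlib

/-- A deterministic decision tree over `m` Boolean variables. -/
inductive DT (m : ℕ) : Type where
  | leaf : Bool → DT m
  | node : Fin m → DT m → DT m → DT m

/-- Evaluation of a decision tree on an input. -/
def DT.eval {m : ℕ} : DT m → (Fin m → Bool) → Bool
  | .leaf b, _ => b
  | .node i t0 t1, x => if x i then t1.eval x else t0.eval x

/-- Depth of a decision tree: maximum number of queries on a root-to-leaf path. -/
def DT.depth {m : ℕ} : DT m → ℕ
  | .leaf _ => 0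
  | .node _ t0 t1 => max t0.depth t1.depth + 1

/-- The set of variables queried anywhere in the tree. -/
def DT.vars {m : ℕ} : DT m → Finset (Fin m)
  | .leaf _ => ∅
  | .node i t0 t1 => insert i (t0.vars ∪ t1.vars)

/-- Number of internal (query) nodes of a decision tree. -/
def DT.numNodes {m : ℕ} : DT m → ℕ
  | .leaf _ => 0
  | .node _ t0 t1 => t0.numNodes + t1.numNodes + 1

/-- `f` depends on variable `i` if flipping bit `i` can change the value of `f`. -/
def DTDependsOn {m : ℕ} (f : (Fin m → Bool) → Bool) (i : Fin m) : Prop :=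
  ∃ x : Fin m → Bool, f x ≠ f (Function.update x i (!x i))

/-- The winning condition for Prover 1: `∀ α₁ ∃ β₁ … ∀ α_k ∃ β_k, V(α,β) = true`. -/
def AWins : ℕ → (List Bool → Bool) → Prop
  | 0, V => V [] = true
  | k + 1, V => ∀ a : Bool, ∃ b : Bool, AWins k (fun t => V (a :: b :: t))

/-- The winning condition for Prover 0: `∃ α₁ ∀ β₁ … ∃ α_k ∀ β_k, V(α,β) = false`. -/
def BWins : ℕ → (List Bool → Bool) → Prop
  | 0, V => V [] = false
  | k + 1, V => ∃ a : Bool, ∀ b : Bool, BWins k (fun t => V (a :: b :: t))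

/-- Assemble the input `x` together with the `2k` transcript bits
`α₁, β₁, …, α_k, β_k` into a single input of length `n + 2k`. -/
def assemble (n k : ℕ) (x : Fin n → Bool) (t : List Bool) : Fin (n + 2 * k) → Bool :=
  fun j => if h : (j : ℕ) < n then x ⟨j, h⟩ else t.getD ((j : ℕ) - n) false

/-- A `(k,ℓ)`-debate for `f`: a verifier given by a decision tree of depth at most `ℓ`
on the input bits and the `2k` transcript bits, satisfying the alternating-quantifier
winning conditions. -/
def IsDebate (n k ℓ : ℕ) (f : (Fin n → Bool) → Bool) : Prop :=
  ∃ T : DT (n + 2 * k), T.depth ≤ ℓ ∧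
    ∀ x : Fin n → Bool,
      (f x = true → AWins k (fun t => T.eval (assemble n k x t))) ∧
      (f x = false → BWins k (fun t => T.eval (assemble n k x t)))

/-- Debate query complexity: the least verifier depth `ℓ` over all `(k,ℓ)`-debates for `f`. -/
noncomputable def DQC (n : ℕ) (f : (Fin n → Bool) → Bool) : ℕ :=
  sInf {ℓ | ∃ k, IsDebate n k ℓ f}

/-!
A verifier of depth `ℓ` reads fewer than `2 ^ ℓ` variables, so once there are more than
`2 ^ ℓ` rounds, the bits of some round are never queried. The quantifier pair `∀ α ∃ β` of
that round is then vacuous, and deleting the round (reindexing the later transcript bits)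
gives a debate with one round fewer and a verifier of the same depth. Since the games are
finite and determined, Prover 0 wins exactly when Prover 1 does not, so only Prover 1's
condition has to be tracked.
-/

namespace DT

variable {m m' : ℕ}

def relabel (g : Fin m → Fin m') : DT m → DT m'
  | .leaf b => .leaf b
  | .node i t0 t1 => .node (g i) (t0.relabel g) (t1.relabel g)

@[simp]
theorem eval_relabel (g : Fin m → Fin m') (T : DT m) (y : Fin m' → Bool) :
    (T.relabel g).eval y = T.eval (y ∘ g) := by
  induction T with
  | leaf b => rfl
  | node i t0 t1 ih0 ih1 => simp [relabel, eval, ih0, ih1]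

@[simp]
theorem depth_relabel (g : Fin m → Fin m') (T : DT m) : (T.relabel g).depth = T.depth := by
  induction T with
  | leaf b => rfl
  | node i t0 t1 ih0 ih1 => simp [relabel, depth, ih0, ih1]

theorem eval_congr {T : DT m} {y z : Fin m → Bool} (h : ∀ j ∈ T.vars, y j = z j) :
    T.eval y = T.eval z := by
  induction T with
  | leaf b => rfl
  | node i t0 t1 ih0 ih1 =>
    simp only [vars, Finset.mem_insert, Finset.mem_union] at h
    simp only [eval, h i (.inl rfl), ih0 fun j hj => h j (.inr (.inl hj)),
      ih1 fun j hj => h j (.inr (.inr hj))]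

theorem card_vars_lt_two_pow_depth (T : DT m) : T.vars.card < 2 ^ T.depth := by
  induction T with
  | leaf b => simp [vars, depth]
  | node i t0 t1 ih0 ih1 =>
    have h0 : 2 ^ t0.depth ≤ 2 ^ max t0.depth t1.depth :=
      Nat.pow_le_pow_right two_pos (le_max_left _ _)
    have h1 : 2 ^ t1.depth ≤ 2 ^ max t0.depth t1.depth :=
      Nat.pow_le_pow_right two_pos (le_max_right _ _)
    calc (insert i (t0.vars ∪ t1.vars)).card
        ≤ t0.vars.card + t1.vars.card + 1 :=
          (Finset.card_insert_le _ _).trans (by grw [Finset.card_union_le])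
      _ < 2 ^ (max t0.depth t1.depth + 1) := by rw [pow_succ]; omega

end DT

def insertRound (i : ℕ) (a b : Bool) (t : List Bool) : List Bool :=
  t.take (2 * i) ++ a :: b :: t.drop (2 * i)

@[simp]
theorem insertRound_zero (a b : Bool) (t : List Bool) : insertRound 0 a b t = a :: b :: t := by
  simp [insertRound]

@[simp]
theorem insertRound_succ (i : ℕ) (a b c d : Bool) (t : List Bool) :
    insertRound (i + 1) a b (c :: d :: t) = c :: d :: insertRound i a b t := by
  simp [insertRound, Nat.mul_succ]

theorem getD_insertRound_of_lt {i p : ℕ} {t : List Bool} (ht : 2 * i ≤ t.length)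
    (hp : p < 2 * i) (a b : Bool) : (insertRound i a b t).getD p false = t.getD p false := by
  rw [insertRound, List.getD_append _ _ _ _ (by simp; omega)]
  simp [List.getD_eq_getElem?_getD, hp]

theorem getD_insertRound_of_le {i p : ℕ} {t : List Bool} (ht : 2 * i ≤ t.length)
    (hp : 2 * i + 2 ≤ p) (a b : Bool) :
    (insertRound i a b t).getD p false = t.getD (p - 2) false := by
  rw [insertRound, List.getD_append_right _ _ _ _ (by simp; omega),
    show p - (t.take (2 * i)).length = p - 2 * i - 2 + 1 + 1 by simp only [List.length_take]; omega]
  simp [List.getD_eq_getElem?_getD, List.getElem?_drop,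
    show 2 * i + (p - 2 * i - 2) = p - 2 by omega]

theorem AWins_congr {k : ℕ} {V W : List Bool → Bool}
    (h : ∀ t, t.length = 2 * k → V t = W t) : AWins k V ↔ AWins k W := by
  induction k generalizing V W with
  | zero => simp [AWins, h [] rfl]
  | succ k ih =>
    refine forall_congr' fun a => exists_congr fun b => ih fun t ht => h _ ?_
    simp only [List.length_cons, ht]; ring

theorem BWins_iff_not_AWins {k : ℕ} {V : List Bool → Bool} : BWins k V ↔ ¬ AWins k V := by
  induction k generalizing V with
  | zero => simp [AWins, BWins]
  | succ k ih => simp only [AWins, BWins, ih, not_forall, not_exists]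

theorem AWins_succ_iff_of_round_irrelevant {i k : ℕ} (hi : i ≤ k) {V : List Bool → Bool}
    (hV : ∀ t a b, t.length = 2 * k →
      V (insertRound i a b t) = V (insertRound i false false t)) :
    AWins (k + 1) V ↔ AWins k (fun t => V (insertRound i false false t)) := by
  induction i generalizing k V with
  | zero =>
    have hab (a b : Bool) :
        AWins k (fun t => V (a :: b :: t)) ↔ AWins k (fun t => V (false :: false :: t)) :=
      AWins_congr fun t ht => by simpa using hV t a b ht
    simp only [AWins, hab, insertRound_zero]
    simp
  | succ i ih =>
    obtain ⟨k, rfl⟩ : ∃ k', k = k' + 1 := ⟨k - 1, by omega⟩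
    rw [AWins.eq_2, AWins.eq_2]
    simp only [insertRound_succ]
    refine forall_congr' fun a => exists_congr fun b => ih (by omega) fun t a' b' ht => ?_
    simpa using hV (a :: b :: t) a' b' (by simp only [List.length_cons, ht]; ring)

theorem isDebate_iff {n k ℓ : ℕ} {f : (Fin n → Bool) → Bool} :
    IsDebate n k ℓ f ↔ ∃ T : DT (n + 2 * k), T.depth ≤ ℓ ∧
      ∀ x, f x = true ↔ AWins k (fun t => T.eval (assemble n k x t)) := by
  refine exists_congr fun T => and_congr_right fun _ => forall_congr' fun x => ?_
  rw [BWins_iff_not_AWins]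
  cases f x <;> simp

section DropRound

variable {n k i : ℕ}

-- The two positions of round `i` itself get junk images; they are never queried.
def dropRound (hpos : 0 < n + 2 * k) (hi : i ≤ k) (j : Fin (n + 2 * (k + 1))) :
    Fin (n + 2 * k) :=
  ⟨if (j : ℕ) < n + 2 * i then j else j - 2, by split <;> omega⟩

theorem assemble_insertRound (hpos : 0 < n + 2 * k) (hi : i ≤ k) (x : Fin n → Bool)
    {t : List Bool} (ht : t.length = 2 * k) (a b : Bool) {j : Fin (n + 2 * (k + 1))}
    (hj : (j : ℕ) ≠ n + 2 * i ∧ (j : ℕ) ≠ n + 2 * i + 1) :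
    assemble n (k + 1) x (insertRound i a b t) j = assemble n k x t (dropRound hpos hi j) := by
  have h2i : 2 * i ≤ t.length := by omega
  simp only [assemble, dropRound]
  split_ifs <;> try omega
  · rfl
  · exact getD_insertRound_of_lt h2i (by omega) a b
  · rw [getD_insertRound_of_le h2i (by omega)]; congr 1; omega

end DropRound

theorem exists_verifier_of_round_unqueried {n k i : ℕ} (hpos : 0 < n + 2 * k) (hi : i ≤ k)
    (T : DT (n + 2 * (k + 1)))
    (hfree : ∀ j ∈ T.vars, (j : ℕ) ≠ n + 2 * i ∧ (j : ℕ) ≠ n + 2 * i + 1) :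
    ∃ T' : DT (n + 2 * k), T'.depth = T.depth ∧ ∀ x,
      AWins (k + 1) (fun t => T.eval (assemble n (k + 1) x t)) ↔
        AWins k (fun t => T'.eval (assemble n k x t)) := by
  refine ⟨T.relabel (dropRound hpos hi), T.depth_relabel _, fun x => ?_⟩
  have hkey (t : List Bool) (ht : t.length = 2 * k) (a b : Bool) :
      T.eval (assemble n (k + 1) x (insertRound i a b t)) =
        (T.relabel (dropRound hpos hi)).eval (assemble n k x t) := by
    rw [DT.eval_relabel]
    exact DT.eval_congr fun j hj => assemble_insertRound hpos hi x ht a b (hfree j hj)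
  rw [AWins_succ_iff_of_round_irrelevant hi fun t a b ht => by rw [hkey t ht, hkey t ht]]
  exact AWins_congr fun t ht => hkey t ht false false

theorem exists_round_not_mem {m n K : ℕ} (S : Finset (Fin m)) (hS : S.card < K) :
    ∃ i < K, ∀ j ∈ S, (j : ℕ) ≠ n + 2 * i ∧ (j : ℕ) ≠ n + 2 * i + 1 := by
  have hcard : (S.image fun j : Fin m => ((j : ℕ) - n) / 2).card < (Finset.range K).card :=
    Finset.card_image_le.trans_lt (by simpa using hS)
  obtain ⟨i, hiK, hiS⟩ := Finset.exists_mem_notMem_of_card_lt_card hcard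
  refine ⟨i, Finset.mem_range.mp hiK, fun j hj => ?_⟩
  have : ((j : ℕ) - n) / 2 ≠ i := fun h => hiS (Finset.mem_image.mpr ⟨j, hj, h⟩)
  omega

theorem IsDebate.of_succ {n k ℓ : ℕ} {f : (Fin n → Bool) → Bool}
    (h : IsDebate n (k + 1) ℓ f) (hk : 2 ^ ℓ ≤ k) : IsDebate n k ℓ f := by
  rw [isDebate_iff] at h ⊢
  obtain ⟨T, hdepth, hT⟩ := h
  have hvars : T.vars.card < k + 1 :=
    calc T.vars.card < 2 ^ T.depth := T.card_vars_lt_two_pow_depth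
      _ ≤ 2 ^ ℓ := Nat.pow_le_pow_right two_pos hdepth
      _ < k + 1 := by omega
  obtain ⟨i, hi, hfree⟩ := exists_round_not_mem (n := n) T.vars hvars
  have hpos : 0 < n + 2 * k := by have := Nat.one_le_two_pow (n := ℓ); omega
  obtain ⟨T', hdepth', hT'⟩ := exists_verifier_of_round_unqueried hpos (by omega) T hfree
  exact ⟨T', hdepth' ▸ hdepth, fun x => (hT x).trans (hT' x)⟩

theorem IsDebate.of_two_pow_le {n k ℓ : ℕ} {f : (Fin n → Bool) → Bool}
    (h : IsDebate n k ℓ f) (hk : 2 ^ ℓ ≤ k) : IsDebate n (2 ^ ℓ) ℓ f := by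
  induction k, hk using Nat.le_induction with
  | base => exact h
  | succ k hk ih => exact ih (h.of_succ hk)

/-- If `f` has a `(k,ℓ)`-debate, then `f` has a `(k',ℓ)`-debate with `k' ≤ 2^ℓ`. -/
theorem stmt_6 (n k ℓ : ℕ) (f : (Fin n → Bool) → Bool)
    (h : IsDebate n k ℓ f) :
    ∃ k' : ℕ, k' ≤ 2 ^ ℓ ∧ IsDebate n k' ℓ f := by
  rcases le_total k (2 ^ ℓ) with hk | hk
  · exact ⟨k, hk, h⟩
  · exact ⟨2 ^ ℓ, le_rfl, h.of_two_pow_le hk⟩
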